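/- arXiv:2204.06847 — 5 statements merged into one kernel-verified Lean document; each statement's English description precedes it below -/
import Mathlib

section
/- With A, B, F the exit series of walks started at (p,q), the identity C(x,y;t) = x^p y^q + t·P(x,y)·C(x,y;t) − F(t) − B(1/x;t) − A(1/y;t) holds in ℝ[x,x⁻¹,y,y⁻¹][[t]]. Moreover this equation characterises the quadruple: if C' ∈ ℝ[x,x⁻¹,y,y⁻¹][[t]] whose coefficient of x^i y^j t^n vanishes whenever i ≤ 0 and j ≤ 0, F' ∈ tℝ[[t]], A' ∈ (t/y)ℝ[1/y][[t]] and B' ∈ (t/x)ℝ[1/x][[t]] satisfy C' = x^p y^q + t·P(x,y)·C' − F' − B' − A', then C' = C, A' = A, B' = B and F' = F. -/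
open scoped Classical

/-- The three-quadrant cone `{(i,j) : i > 0 or j > 0}`. -/
def Cone (v : ℤ × ℤ) : Prop := 0 < v.1 ∨ 0 < v.2

/-- Position after `k` steps of the walk starting at `start` with step sequence `σ`. -/
def walkPos (start : ℤ × ℤ) {n : ℕ} (σ : Fin n → ℤ × ℤ) (k : ℕ) : ℤ × ℤ :=
  start + ∑ i : Fin n, if (i : ℕ) < k then σ i else 0

/-- Total weight of walks of length `n` from `start` to `e` whose points all lie
in the three-quadrant cone: the coefficient `c(i,j;n)` of `C(x,y;t)`. -/
noncomputable def coneCount (S : Finset (ℤ × ℤ)) (w : ℤ × ℤ → ℝ) (start : ℤ × ℤ)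
    (n : ℕ) (e : ℤ × ℤ) : ℝ :=
  ∑ σ : Fin n → ↥S,
    if (∀ k ≤ n, Cone (walkPos start (fun i => (σ i : ℤ × ℤ)) k)) ∧
        walkPos start (fun i => (σ i : ℤ × ℤ)) n = e then
      ∏ i : Fin n, w (σ i) else 0

/-- Total weight of walks of length `n` from `start` whose first `n` points lie
in the cone and whose final point is `e`, outside of the cone: the exit
coefficient `h(i,j;n)`. -/
noncomputable def exitCount (S : Finset (ℤ × ℤ)) (w : ℤ × ℤ → ℝ) (start : ℤ × ℤ)
    (n : ℕ) (e : ℤ × ℤ) : ℝ :=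
  ∑ σ : Fin n → ↥S,
    if (∀ k < n, Cone (walkPos start (fun i => (σ i : ℤ × ℤ)) k)) ∧
        walkPos start (fun i => (σ i : ℤ × ℤ)) n = e ∧ ¬ Cone e then
      ∏ i : Fin n, w (σ i) else 0

lemma walkPos_zero (start : ℤ × ℤ) {n : ℕ} (σ : Fin n → ℤ × ℤ) :
    walkPos start σ 0 = start := by simp [walkPos]
lemma walkPos_snoc (start : ℤ × ℤ) {m : ℕ} (τ : Fin m → ℤ × ℤ) (s : ℤ × ℤ) (k : ℕ) :
    walkPos start (Fin.snoc τ s) k = walkPos start τ k + (if m < k then s else 0) := by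
  unfold walkPos; rw [Fin.sum_univ_castSucc]; simp [add_assoc]
lemma walkPos_stable (start : ℤ × ℤ) {m : ℕ} (τ : Fin m → ℤ × ℤ) {k : ℕ} (hk : m ≤ k) :
    walkPos start τ k = walkPos start τ m := by
  unfold walkPos; congr 1
  refine Finset.sum_congr rfl fun i _ => ?_
  have : (i : ℕ) < m := i.isLt
  simp [this, lt_of_lt_of_le this hk]

noncomputable def preCount (S : Finset (ℤ × ℤ)) (w : ℤ × ℤ → ℝ) (start : ℤ × ℤ)
    (n : ℕ) (e : ℤ × ℤ) : ℝ :=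
  ∑ σ : Fin n → ↥S,
    if (∀ k < n, Cone (walkPos start (fun i => (σ i : ℤ × ℤ)) k)) ∧
        walkPos start (fun i => (σ i : ℤ × ℤ)) n = e then
      ∏ i : Fin n, w (σ i) else 0

variable {S : Finset (ℤ × ℤ)} {w : ℤ × ℤ → ℝ} {start e : ℤ × ℤ} {n : ℕ}

lemma coneCount_of_not_cone (he : ¬ Cone e) : coneCount S w start n e = 0 := by
  refine Finset.sum_eq_zero fun σ _ => ?_
  rw [if_neg]
  rintro ⟨h1, h2⟩
  exact he (h2 ▸ h1 n le_rfl)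

lemma exitCount_of_cone (he : Cone e) : exitCount S w start n e = 0 := by
  refine Finset.sum_eq_zero fun σ _ => ?_
  rw [if_neg]
  rintro ⟨-, -, h3⟩
  exact h3 he

lemma preCount_eq_coneCount (he : Cone e) :
    preCount S w start n e = coneCount S w start n e := by
  refine Finset.sum_congr rfl fun σ _ => ?_
  congr 1
  apply propext
  constructor
  · rintro ⟨h1, h2⟩
    refine ⟨fun k hk => ?_, h2⟩
    rcases lt_or_eq_of_le hk with h | h
    · exact h1 k h
    · subst h; rw [h2]; exact he
  · rintro ⟨h1, h2⟩
    exact ⟨fun k hk => h1 k hk.le, h2⟩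

lemma preCount_eq_exitCount (he : ¬ Cone e) :
    preCount S w start n e = exitCount S w start n e := by
  refine Finset.sum_congr rfl fun σ _ => ?_
  congr 1
  apply propext
  exact ⟨fun ⟨h1, h2⟩ => ⟨h1, h2, he⟩, fun ⟨h1, h2, _⟩ => ⟨h1, h2⟩⟩

lemma coneCount_zero (hs : Cone start) (e : ℤ × ℤ) :
    coneCount S w start 0 e = if e = start then 1 else 0 := by
  unfold coneCount
  trans (∑ _σ : Fin 0 → ↥S, if e = start then (1:ℝ) else 0)
  · refine Finset.sum_congr rfl fun σ _ => ?_
    simp [Nat.le_zero, walkPos_zero, hs, eq_comm]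
  · rw [Finset.sum_const]; simp

lemma exitCount_zero' (hs : Cone start) (e : ℤ × ℤ) :
    exitCount S w start 0 e = 0 := by
  refine Finset.sum_eq_zero fun σ _ => ?_
  rw [if_neg]
  rintro ⟨-, h2, h3⟩
  rw [walkPos_zero] at h2
  exact h3 (h2 ▸ hs)

lemma preCount_succ (m : ℕ) (e : ℤ × ℤ) :
    preCount S w start (m + 1) e
      = ∑ s ∈ S, w s * coneCount S w start m (e.1 - s.1, e.2 - s.2) := by
  rw [preCount, ← Equiv.sum_comp (Fin.snocEquiv (fun _ => ↥S)), Fintype.sum_prod_type]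
  rw [← Finset.sum_coe_sort S (fun s => w s * coneCount S w start m (e.1 - s.1, e.2 - s.2))]
  refine Finset.sum_congr rfl fun s _ => ?_
  rw [coneCount, Finset.mul_sum]
  refine Finset.sum_congr rfl fun τ _ => ?_
  have hfun : (fun i => ((Fin.snocEquiv (fun _ => ↥S) (s, τ)) i : ℤ × ℤ))
      = Fin.snoc (fun i => (τ i : ℤ × ℤ)) (s : ℤ × ℤ) := by
    funext i
    exact congrFun (Fin.comp_snoc (fun x : ↥S => (x : ℤ × ℤ)) τ s) i
  rw [hfun]
  set τ' : Fin m → ℤ × ℤ := fun i => (τ i : ℤ × ℤ) with hτ'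
  have hpos : ∀ k, walkPos start (Fin.snoc τ' (s : ℤ × ℤ)) k
      = walkPos start τ' k + (if m < k then (s : ℤ × ℤ) else 0) :=
    walkPos_snoc start _ _
  have hprod : (∏ i : Fin (m + 1), w ((Fin.snocEquiv (fun _ => ↥S) (s, τ)) i : ℤ × ℤ))
      = (∏ i : Fin m, w (τ i)) * w s := by
    rw [Fin.prod_univ_castSucc]
    simp [Fin.snocEquiv]
  have hiff : ((∀ k < m + 1, Cone (walkPos start (Fin.snoc τ' (s : ℤ × ℤ)) k)) ∧
        walkPos start (Fin.snoc τ' (s : ℤ × ℤ)) (m + 1) = e)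
      ↔ ((∀ k ≤ m, Cone (walkPos start τ' k)) ∧
        walkPos start τ' m = (e.1 - (s : ℤ × ℤ).1, e.2 - (s : ℤ × ℤ).2)) := by
    have hlast : walkPos start (Fin.snoc τ' (s : ℤ × ℤ)) (m + 1)
        = walkPos start τ' m + (s : ℤ × ℤ) := by
      rw [hpos, if_pos (Nat.lt_succ_self m), walkPos_stable start _ (Nat.le_succ m)]
    have hsub : e - (s : ℤ × ℤ) = (e.1 - (s : ℤ × ℤ).1, e.2 - (s : ℤ × ℤ).2) := rfl
    constructor
    · rintro ⟨h1, h2⟩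
      refine ⟨fun k hk => ?_, ?_⟩
      · have := h1 k (Nat.lt_succ_of_le hk)
        rwa [hpos, if_neg (by omega), add_zero] at this
      · rw [hlast] at h2
        rw [← hsub]
        exact eq_sub_of_add_eq h2
    · rintro ⟨h1, h2⟩
      refine ⟨fun k hk => ?_, ?_⟩
      · rw [hpos, if_neg (by omega), add_zero]
        exact h1 k (by omega)
      · rw [hlast, h2, ← hsub]
        abel
  rw [if_congr hiff rfl rfl, hprod]
  split_ifs with h
  · ring
  · ring

lemma funcEq {S : Finset (ℤ × ℤ)} {w : ℤ × ℤ → ℝ}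
    (hSsteps : ∀ s ∈ S, s ≠ (0, 0) ∧ s.1.natAbs ≤ 1 ∧ s.2.natAbs ≤ 1)
    {p q : ℤ} (hpq : Cone (p, q)) (n : ℕ) (i j : ℤ) :
    coneCount S w (p, q) n (i, j) =
      (if n = 0 ∧ (i, j) = (p, q) then (1 : ℝ) else 0)
        + (if n = 0 then 0 else
            ∑ s ∈ S, w s * coneCount S w (p, q) (n - 1) (i - s.1, j - s.2))
        - (if i = 0 ∧ j = 0 then exitCount S w (p, q) n (0, 0) else 0)
        - (if j = 0 ∧ i < 0 then exitCount S w (p, q) n (i, 0) else 0)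
        - (if i = 0 ∧ j < 0 then exitCount S w (p, q) n (0, j) else 0) := by
  rcases n with _ | m
  · rw [coneCount_zero hpq]
    simp [exitCount_zero' hpq]
  · simp only [Nat.succ_ne_zero, if_false, false_and, Nat.add_sub_cancel]
    by_cases hc : Cone (i, j)
    · have h1 : ¬(i = 0 ∧ j = 0) := by rintro ⟨rfl, rfl⟩; simp [Cone] at hc
      have h2 : ¬(j = 0 ∧ i < 0) := by rintro ⟨rfl, h⟩; simp [Cone] at hc; omega
      have h3 : ¬(i = 0 ∧ j < 0) := by rintro ⟨rfl, h⟩; simp [Cone] at hc; omega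
      rw [if_neg h1, if_neg h2, if_neg h3, ← preCount_eq_coneCount hc]
      have := preCount_succ (S := S) (w := w) (start := (p, q)) m (i, j)
      rw [this]
      ring
    · rw [coneCount_of_not_cone hc]
      simp only [Cone, not_or, not_lt] at hc
      obtain ⟨hi, hj⟩ := hc
      rcases lt_or_eq_of_le hi with hi' | rfl
      · rcases lt_or_eq_of_le hj with hj' | rfl
        · -- i < 0, j < 0 : everything vanishes
          have hz : (∑ s ∈ S, w s * coneCount S w (p, q) m (i - s.1, j - s.2)) = 0 := by
            refine Finset.sum_eq_zero fun s hs => ?_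
            obtain ⟨-, hs1, hs2⟩ := hSsteps s hs
            rw [coneCount_of_not_cone (by simp only [Cone, not_or, not_lt]; omega), mul_zero]
          rw [hz]
          split_ifs <;> first | ring1 | (exfalso; omega)
        · -- i < 0, j = 0
          have hnc : ¬ Cone (i, (0:ℤ)) := by simp only [Cone, not_or, not_lt]; omega
          have hsum : (∑ s ∈ S, w s * coneCount S w (p, q) m (i - s.1, 0 - s.2))
              = exitCount S w (p, q) (m + 1) (i, 0) := by
            rw [← preCount_eq_exitCount hnc]
            exact (preCount_succ m (i, 0)).symm
          rw [hsum]
          split_ifs <;> first | ring1 | (exfalso; omega)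
      · rcases lt_or_eq_of_le hj with hj' | rfl
        · -- i = 0, j < 0
          have hnc : ¬ Cone ((0:ℤ), j) := by simp only [Cone, not_or, not_lt]; omega
          have hsum : (∑ s ∈ S, w s * coneCount S w (p, q) m (0 - s.1, j - s.2))
              = exitCount S w (p, q) (m + 1) (0, j) := by
            rw [← preCount_eq_exitCount hnc]
            exact (preCount_succ m (0, j)).symm
          rw [hsum]
          split_ifs <;> first | ring1 | (exfalso; omega)
        · -- i = 0, j = 0
          have hnc : ¬ Cone ((0:ℤ), (0:ℤ)) := by simp [Cone]
          have hsum : (∑ s ∈ S, w s * coneCount S w (p, q) m (0 - s.1, 0 - s.2))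
              = exitCount S w (p, q) (m + 1) (0, 0) := by
            rw [← preCount_eq_exitCount hnc]
            exact (preCount_succ m (0, 0)).symm
          rw [hsum]
          split_ifs <;> first | ring1 | (exfalso; omega)

/-- The identity
`C(x,y;t) = x^p y^q + t·P(x,y)·C(x,y;t) − F(t) − B(1/x;t) − A(1/y;t)`
holds in `ℝ[x,x⁻¹,y,y⁻¹][[t]]` (stated coefficientwise: the coefficient of
`x^i y^j t^n` of both sides agree), and this equation, together with the
support conditions, characterises the quadruple `(C, A, B, F)`. -/
theorem statement0 (S : Finset (ℤ × ℤ)) (hS : S.Nonempty)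
    (hSsteps : ∀ s ∈ S, s ≠ (0, 0) ∧ s.1.natAbs ≤ 1 ∧ s.2.natAbs ≤ 1)
    (w : ℤ × ℤ → ℝ) (hw : ∀ s ∈ S, 0 < w s)
    (p q : ℤ) (hp : 0 < p) (hq : 0 ≤ q) :
    -- the identity `C = x^p y^q + t P C − F − B − A`
    (∀ (n : ℕ) (i j : ℤ),
      coneCount S w (p, q) n (i, j) =
        (if n = 0 ∧ (i, j) = (p, q) then (1 : ℝ) else 0)
          + (if n = 0 then 0 else
              ∑ s ∈ S, w s * coneCount S w (p, q) (n - 1) (i - s.1, j - s.2))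
          - (if i = 0 ∧ j = 0 then exitCount S w (p, q) n (0, 0) else 0)
          - (if j = 0 ∧ i < 0 then exitCount S w (p, q) n (i, 0) else 0)
          - (if i = 0 ∧ j < 0 then exitCount S w (p, q) n (0, j) else 0))
    ∧
    -- the characterisation: any quadruple `(C', F', A', B')` of series in the
    -- prescribed spaces satisfying the same equation coincides with
    -- `(C, F, A, B)`
    (∀ (c' : ℕ → ℤ × ℤ → ℝ) (F' : ℕ → ℝ) (a' b' : ℕ → ℤ → ℝ),
      (∀ n, (Function.support (c' n)).Finite) →
      (∀ n i j, i ≤ 0 → j ≤ 0 → c' n (i, j) = 0) →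
      F' 0 = 0 →
      (∀ j, a' 0 j = 0) → (∀ n j, 0 ≤ j → a' n j = 0) →
      (∀ n, (Function.support (a' n)).Finite) →
      (∀ i, b' 0 i = 0) → (∀ n i, 0 ≤ i → b' n i = 0) →
      (∀ n, (Function.support (b' n)).Finite) →
      (∀ (n : ℕ) (i j : ℤ),
        c' n (i, j) =
          (if n = 0 ∧ (i, j) = (p, q) then (1 : ℝ) else 0)
            + (if n = 0 then 0 else ∑ s ∈ S, w s * c' (n - 1) (i - s.1, j - s.2))
            - (if i = 0 ∧ j = 0 then F' n else 0)
            - (if j = 0 ∧ i < 0 then b' n i else 0)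
            - (if i = 0 ∧ j < 0 then a' n j else 0)) →
      ((∀ n e, c' n e = coneCount S w (p, q) n e)
        ∧ (∀ n j, j < 0 → a' n j = exitCount S w (p, q) n (0, j))
        ∧ (∀ n i, i < 0 → b' n i = exitCount S w (p, q) n (i, 0))
        ∧ (∀ n, F' n = exitCount S w (p, q) n (0, 0)))) := by
  
  have hpq : Cone (p, q) := Or.inl hp
  refine ⟨funcEq hSsteps hpq, ?_⟩
  intro c' F' a' b' _ hcsupp hF0 ha0 hasupp _ hb0 hbsupp _ heq
  have hC : ∀ n e, c' n e = coneCount S w (p, q) n e := by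
    intro n
    induction n with
    | zero =>
      rintro ⟨i, j⟩
      rw [heq 0 i j, funcEq hSsteps hpq 0 i j]
      simp [hF0, ha0 j, hb0 i, exitCount_zero' hpq]
    | succ m ih =>
      rintro ⟨i, j⟩
      by_cases hc : Cone (i, j)
      · have h1 : ¬(i = 0 ∧ j = 0) := by rintro ⟨rfl, rfl⟩; simp [Cone] at hc
        have h2 : ¬(j = 0 ∧ i < 0) := by rintro ⟨rfl, h⟩; simp [Cone] at hc; omega
        have h3 : ¬(i = 0 ∧ j < 0) := by rintro ⟨rfl, h⟩; simp [Cone] at hc; omega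
        rw [heq (m + 1) i j, funcEq hSsteps hpq (m + 1) i j]
        simp only [Nat.succ_ne_zero, if_false, false_and, Nat.add_sub_cancel,
          if_neg h1, if_neg h2, if_neg h3]
        have hsum : (∑ s ∈ S, w s * c' m (i - s.1, j - s.2))
            = ∑ s ∈ S, w s * coneCount S w (p, q) m (i - s.1, j - s.2) :=
          Finset.sum_congr rfl fun s _ => by rw [ih]
        rw [hsum]
      · simp only [Cone, not_or, not_lt] at hc
        rw [hcsupp (m + 1) i j hc.1 hc.2, coneCount_of_not_cone (by
          simp only [Cone, not_or, not_lt]; exact hc)]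
  have hF : ∀ n, F' n = exitCount S w (p, q) n (0, 0) := by
    intro n
    rcases n with _ | m
    · rw [hF0, exitCount_zero' hpq]
    · have h1 := heq (m + 1) 0 0
      have h2 := funcEq (w := w) hSsteps hpq (m + 1) 0 0
      simp only [hC] at h1
      simp only [Nat.succ_ne_zero, if_false, false_and, Nat.add_sub_cancel, and_true,
        lt_irrefl, and_false, if_true, if_pos (⟨rfl, rfl⟩ : (0:ℤ) = 0 ∧ (0:ℤ) = 0)] at h1 h2
      linarith [h1, h2]
  refine ⟨hC, ?_, ?_, hF⟩
  · intro n j hj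
    rcases n with _ | m
    · rw [ha0 j, exitCount_zero' hpq]
    · have h1 := heq (m + 1) 0 j
      have h2 := funcEq (w := w) hSsteps hpq (m + 1) 0 j
      simp only [hC] at h1
      simp only [Nat.succ_ne_zero, if_false, false_and, Nat.add_sub_cancel, true_and,
        and_true, lt_irrefl, and_false, if_neg hj.ne, if_pos hj] at h1 h2
      linarith [h1, h2]
  · intro n i hi
    rcases n with _ | m
    · rw [hb0 i, exitCount_zero' hpq]
    · have h1 := heq (m + 1) i 0
      have h2 := funcEq (w := w) hSsteps hpq (m + 1) i 0
      simp only [hC] at h1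
      simp only [Nat.succ_ne_zero, if_false, false_and, Nat.add_sub_cancel, true_and,
        and_true, lt_irrefl, and_false, if_neg hi.ne, if_pos hi] at h1 h2
      linarith [h1, h2]
end

section
/- For every real t with 0 < t < 1/P(1,1), the series Σ_{n≥1} t^n · (Σ_{(i,j)∉𝒞} h(i,j;n)) converges and its sum is strictly less than 1; equivalently, F(t) + A(1;t) + B(1;t) < 1, where A(1;t) and B(1;t) denote the evaluations of the exit series at y = 1 and x = 1. -/
open scoped Classical

/-- Total weight of walks of length `n` from `start` whose first `n` points lie in
the three-quadrant cone and whose final point lies outside the cone: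
the coefficient of `t^n` in `F(t) + A(1;t) + B(1;t)`. -/
noncomputable def exitTotal (S : Finset (ℤ × ℤ)) (w : ℤ × ℤ → ℝ) (start : ℤ × ℤ)
    (n : ℕ) : ℝ :=
  ∑ σ : Fin n → ↥S,
    if (∀ k < n, Cone (walkPos start (fun i => (σ i : ℤ × ℤ)) k)) ∧
        ¬ Cone (walkPos start (fun i => (σ i : ℤ × ℤ)) n) then
      ∏ i : Fin n, w (σ i) else 0

noncomputable def coneTotal (S : Finset (ℤ × ℤ)) (w : ℤ × ℤ → ℝ) (start : ℤ × ℤ)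
    (n : ℕ) : ℝ :=
  ∑ σ : Fin n → ↥S,
    if ∀ k ≤ n, Cone (walkPos start (fun i => (σ i : ℤ × ℤ)) k) then
      ∏ i : Fin n, w (σ i) else 0

lemma walkPos_snoc_of_le (start : ℤ × ℤ) {n : ℕ} (τ : Fin n → ℤ × ℤ) (s : ℤ × ℤ)
    {k : ℕ} (hk : k ≤ n) :
    walkPos start (Fin.snoc τ s) k = walkPos start τ k := by
  unfold walkPos
  congr 1
  rw [Fin.sum_univ_castSucc]
  simp only [Fin.snoc_castSucc, Fin.snoc_last, Fin.val_last, Fin.coe_castSucc]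
  rw [if_neg (by omega), add_zero]

lemma cone_exit_rec (S : Finset (ℤ × ℤ)) (w : ℤ × ℤ → ℝ) (start : ℤ × ℤ) (n : ℕ) :
    coneTotal S w start (n + 1) + exitTotal S w start (n + 1)
      = (∑ s ∈ S, w s) * coneTotal S w start n := by
  classical
  rw [coneTotal, exitTotal, ← Finset.sum_add_distrib]
  rw [← Equiv.sum_comp (Fin.snocEquiv (fun _ => ↥S))]
  rw [Fintype.sum_prod_type]
  rw [← Finset.sum_coe_sort S w, coneTotal, Finset.sum_mul, ]
  refine Finset.sum_congr rfl fun s _ => ?_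
  rw [Finset.mul_sum]
  refine Finset.sum_congr rfl fun τ _ => ?_
  have hcoe : (fun i => (((Fin.snocEquiv (fun _ => ↥S)) (s, τ)) i : ℤ × ℤ))
      = Fin.snoc (fun i => (τ i : ℤ × ℤ)) (s : ℤ × ℤ) := by
    funext i
    simp only [Fin.snocEquiv_apply]
    exact congrFun (Fin.comp_snoc (fun x : ↥S => (x : ℤ × ℤ)) τ s) i
  have hP : (∏ i : Fin (n+1), w (((Fin.snocEquiv (fun _ => ↥S)) (s, τ)) i : ℤ × ℤ))
      = (∏ i : Fin n, w (τ i)) * w s := by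
    simp only [Fin.snocEquiv_apply]
    rw [Fin.prod_univ_castSucc]
    simp
  simp only [hcoe, hP]
  set στ := (fun i => (τ i : ℤ × ℤ)) with hστ
  set s' := (s : ℤ × ℤ)
  by_cases hC : ∀ k ≤ n, Cone (walkPos start στ k)
  · have hC' : ∀ k ≤ n, Cone (walkPos start (Fin.snoc στ s') k) := fun k hk => by
      rw [walkPos_snoc_of_le _ _ _ hk]; exact hC k hk
    by_cases hD : Cone (walkPos start (Fin.snoc στ s') (n+1))
    · rw [if_pos, if_neg, if_pos hC]
      · ring
      · rintro ⟨-, h⟩; exact h hD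
      · intro k hk
        rcases Nat.lt_or_ge k (n+1) with h | h
        · exact hC' k (by omega)
        · have : k = n + 1 := by omega
          subst this; exact hD
    · rw [if_neg, if_pos, if_pos hC]
      · ring
      · exact ⟨fun k hk => hC' k (by omega), hD⟩
      · intro h; exact hD (h (n+1) le_rfl)
  · push_neg at hC
    obtain ⟨k, hk, hk2⟩ := hC
    have hk3 : ¬ Cone (walkPos start (Fin.snoc στ s') k) := by
      rw [walkPos_snoc_of_le _ _ _ hk]; exact hk2
    rw [if_neg, if_neg, if_neg]
    · ring
    · intro h; exact hk2 (h k hk)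
    · rintro ⟨h, -⟩; exact hk3 (h k (by omega))
    · intro h; exact hk3 (h k (by omega))

lemma coneTotal_nonneg (S : Finset (ℤ × ℤ)) (w : ℤ × ℤ → ℝ) (hw : ∀ s ∈ S, 0 < w s)
    (start : ℤ × ℤ) (n : ℕ) : 0 ≤ coneTotal S w start n := by
  refine Finset.sum_nonneg fun σ _ => ?_
  split
  · exact le_of_lt (Finset.prod_pos fun i _ => hw _ (σ i).2)
  · exact le_rfl

lemma exitTotal_nonneg (S : Finset (ℤ × ℤ)) (w : ℤ × ℤ → ℝ) (hw : ∀ s ∈ S, 0 < w s)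
    (start : ℤ × ℤ) (n : ℕ) : 0 ≤ exitTotal S w start n := by
  refine Finset.sum_nonneg fun σ _ => ?_
  split
  · exact le_of_lt (Finset.prod_pos fun i _ => hw _ (σ i).2)
  · exact le_rfl

/-- For `0 < t < 1/P(1,1)`, the series
`Σ_{n} t^n · (Σ_{(i,j)∉𝒞} h(i,j;n))` converges and its sum is strictly less
than `1`; equivalently `F(t) + A(1;t) + B(1;t) < 1`.  (All walks counted here
have length at least `1`, since the starting point lies in the cone.) -/
theorem statement3 (S : Finset (ℤ × ℤ)) (hS : S.Nonempty)
    (hSsteps : ∀ s ∈ S, s ≠ (0, 0) ∧ s.1.natAbs ≤ 1 ∧ s.2.natAbs ≤ 1)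
    (w : ℤ × ℤ → ℝ) (hw : ∀ s ∈ S, 0 < w s)
    (p q : ℤ) (hp : 0 < p) (hq : 0 ≤ q)
    (t : ℝ) (ht0 : 0 < t) (ht1 : t < 1 / ∑ s ∈ S, w s) :
    Summable (fun n : ℕ => t ^ n * exitTotal S w (p, q) n) ∧
    ∑' n : ℕ, t ^ n * exitTotal S w (p, q) n < 1 := by
  set W := ∑ s ∈ S, w s with hWdef
  have hW0 : 0 < W := Finset.sum_pos (fun s hs => hw s hs) hS
  have htW : t * W < 1 := by
    have := (lt_div_iff₀ hW0).mp ht1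
    linarith
  set c := coneTotal S w (p, q) with hcdef
  set e := exitTotal S w (p, q) with hedef
  have hrec : ∀ n, c (n + 1) + e (n + 1) = W * c n := fun n => cone_exit_rec S w (p, q) n
  have hcn : ∀ n, 0 ≤ c n := fun n => coneTotal_nonneg S w hw _ n
  have hen : ∀ n, 0 ≤ e n := fun n => exitTotal_nonneg S w hw _ n
  have hc0 : c 0 = 1 := by
    rw [hcdef, coneTotal, Fintype.sum_unique, if_pos, Finset.univ_eq_empty, Finset.prod_empty]
    intro k hk
    interval_cases k
    simp only [walkPos, Finset.univ_eq_empty, Finset.sum_empty, add_zero]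
    exact Or.inl hp
  have he0 : e 0 = 0 := by
    rw [hedef, exitTotal]
    refine Finset.sum_eq_zero fun σ _ => ?_
    rw [if_neg]
    rintro ⟨-, h⟩
    apply h
    simp only [walkPos, Finset.univ_eq_empty, Finset.sum_empty, add_zero]
    exact Or.inl hp
  -- Φ_N := ∑_{n ≤ N+1} t^n e n + t^(N+1) c (N+1) ≤ t W
  have hPhi : ∀ N : ℕ, (∑ n ∈ Finset.range (N + 2), t ^ n * e n)
      + t ^ (N + 1) * c (N + 1) ≤ t * W := by
    intro N
    induction N with
    | zero =>
      show (∑ n ∈ Finset.range 2, t ^ n * e n) + t ^ 1 * c 1 ≤ t * W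
      rw [Finset.sum_range_succ, Finset.sum_range_one, he0]
      have h1 := hrec 0
      rw [hc0, mul_one] at h1
      have h1 : c 1 + e 1 = W := h1
      have : t ^ 1 * e 1 + t ^ 1 * c 1 = t * W := by
        rw [← mul_add, pow_one]
        rw [add_comm] at h1
        rw [h1]
      linarith [this]
    | succ N ih =>
      show (∑ n ∈ Finset.range (N + 2 + 1), t ^ n * e n) + t ^ (N + 2) * c (N + 2) ≤ t * W
      rw [Finset.sum_range_succ]
      have h1 : c (N + 2) + e (N + 2) = W * c (N + 1) := hrec (N + 1)
      have key : t ^ (N + 2) * e (N + 2) + t ^ (N + 2) * c (N + 2)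
          ≤ t ^ (N + 1) * c (N + 1) := by
        rw [← mul_add, add_comm (e (N+2)), h1]
        have : t ^ (N + 2) * (W * c (N + 1)) = (t * W) * (t ^ (N + 1) * c (N + 1)) := by
          ring
        rw [this]
        have hnn : 0 ≤ t ^ (N + 1) * c (N + 1) :=
          mul_nonneg (pow_nonneg ht0.le _) (hcn _)
        nlinarith
      linarith
  have hbound : ∀ M : ℕ, (∑ n ∈ Finset.range M, t ^ n * e n) ≤ t * W := by
    intro M
    match M with
    | 0 => simp; positivity
    | 1 =>
      rw [Finset.sum_range_one, he0]
      simp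
      positivity
    | (N + 2) =>
      have := hPhi N
      have hnn : 0 ≤ t ^ (N + 1) * c (N + 1) :=
        mul_nonneg (pow_nonneg ht0.le _) (hcn _)
      linarith
  have hnn : ∀ n, 0 ≤ t ^ n * e n := fun n =>
    mul_nonneg (pow_nonneg ht0.le _) (hen n)
  have hsum : Summable (fun n : ℕ => t ^ n * e n) :=
    summable_of_sum_range_le hnn hbound
  exact ⟨hsum, lt_of_le_of_lt (Summable.tsum_le_of_sum_range_le hsum hbound) htW⟩
end

section
/- Let M, N be positive integers with M < 2N, let τ ∈ ℂ with πτ ≠ 0, and set γ = Mπτ/(2N). Let J, B : ℂ → ℂ be functions satisfying J(z+πτ) = J(z) and B(z + 2πτ − 2γ) − B(z) = J(z) for all z ∈ ℂ, and define E(z) = Σ_{j=0}^{N−1} J(2jγ + z). Then B(z + (2N−M)πτ) − B(z) = E(z) for all z. Consequently, if E is identically zero then (2N−M)πτ is a period of B, while if E is not identically zero then mπτ is not a period of B for any positive integer m. -/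
/-- A function with period `p` is invariant under adding any natural multiple of `p`. -/
lemma aux_per_nat (f : ℂ → ℂ) (p : ℂ) (hf : ∀ z, f (z + p) = f z) :
    ∀ k : ℕ, ∀ z, f (z + (k : ℂ) * p) = f z := by
  intro k
  induction k with
  | zero => intro z; simp
  | succ k ih =>
    intro z
    have harg : z + ((k + 1 : ℕ) : ℂ) * p = (z + (k : ℂ) * p) + p := by push_cast; ring
    rw [harg, hf, ih]

lemma aux_per_nat_sub (f : ℂ → ℂ) (p : ℂ) (hf : ∀ z, f (z + p) = f z) :
    ∀ k : ℕ, ∀ z, f (z - (k : ℂ) * p) = f z := by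
  intro k z
  have h := aux_per_nat f p hf k (z - (k : ℂ) * p)
  rw [sub_add_cancel] at h
  rw [h]

/-- Telescoping identity for the shift equation
`B(z + 2πτ − 2γ) − B(z) = J(z)` when `γ = Mπτ/(2N)`: one has
`B(z + (2N−M)πτ) − B(z) = E(z)` where `E(z) = Σ_{j=0}^{N−1} J(2jγ + z)`.
Consequently, if `E ≡ 0` then `(2N−M)πτ` is a period of `B`, and if `E ≢ 0`
then no positive integer multiple of `πτ` is a period of `B`. -/
theorem statement6 (M N : ℕ) (hM : 0 < M) (hN : 0 < N) (hMN : M < 2 * N)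
    (τ : ℂ) (hτ : (Real.pi : ℂ) * τ ≠ 0)
    (γ : ℂ) (hγ : γ = (M : ℂ) * (Real.pi : ℂ) * τ / (2 * (N : ℂ)))
    (J B : ℂ → ℂ)
    (hJ : ∀ z, J (z + (Real.pi : ℂ) * τ) = J z)
    (hB : ∀ z, B (z + (2 * (Real.pi : ℂ) * τ - 2 * γ)) - B z = J z)
    (E : ℂ → ℂ)
    (hE : ∀ z, E z = ∑ j ∈ Finset.range N, J (2 * (j : ℂ) * γ + z)) :
    (∀ z, B (z + (2 * (N : ℂ) - (M : ℂ)) * ((Real.pi : ℂ) * τ)) - B z = E z) ∧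
    ((∀ z, E z = 0) →
      ∀ z, B (z + (2 * (N : ℂ) - (M : ℂ)) * ((Real.pi : ℂ) * τ)) = B z) ∧
    ((¬ ∀ z, E z = 0) →
      ∀ m : ℕ, 0 < m → ¬ ∀ z, B (z + (m : ℂ) * ((Real.pi : ℂ) * τ)) = B z) := by
  have hNc : (N : ℂ) ≠ 0 := Nat.cast_ne_zero.mpr hN.ne'
  set p : ℂ := (Real.pi : ℂ) * τ with hp
  have h2Nγ : 2 * (N : ℂ) * γ = (M : ℂ) * p := by
    rw [hγ, hp]; field_simp
  set s : ℂ := 2 * p - 2 * γ with hs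
  -- shift equation in terms of `s`
  have hB' : ∀ z, B (z + s) - B z = J z := by
    intro z
    have h := hB z
    have harg : z + (2 * (Real.pi : ℂ) * τ - 2 * γ) = z + s := by rw [hs, hp]; ring
    rwa [harg] at h
  -- telescoping
  have tel : ∀ n : ℕ, ∀ z, B (z + (n : ℂ) * s) - B z
      = ∑ j ∈ Finset.range n, J (z + (j : ℂ) * s) := by
    intro n
    induction n with
    | zero => intro z; simp
    | succ n ih =>
      intro z
      rw [Finset.sum_range_succ, ← ih z]
      have harg : z + ((n + 1 : ℕ) : ℂ) * s = (z + (n : ℂ) * s) + s := by push_cast; ring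
      rw [harg, ← hB' (z + (n : ℂ) * s)]
      ring
  -- the telescoped sum equals `E z`
  have hsum : ∀ z, ∑ j ∈ Finset.range N, J (z + (j : ℂ) * s) = E z := by
    intro z
    set f : ℕ → ℂ := fun j => J (2 * (j : ℂ) * γ + z) with hf
    have stepA : ∀ j : ℕ, J (z + (j : ℂ) * s) = J (z - 2 * (j : ℂ) * γ) := by
      intro j
      have h := aux_per_nat J p hJ (2 * j) (z - 2 * (j : ℂ) * γ)
      have harg : (z - 2 * (j : ℂ) * γ) + ((2 * j : ℕ) : ℂ) * p = z + (j : ℂ) * s := by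
        rw [hs]; push_cast; ring
      rw [harg] at h
      rw [h]
    have key : ∑ j ∈ Finset.range N, f (j + 1) = ∑ j ∈ Finset.range N, f j := by
      have h1 := Finset.sum_range_succ' f N
      have h2 := Finset.sum_range_succ f N
      have hfN : f N = f 0 := by
        have h := aux_per_nat J p hJ M (2 * ((0 : ℕ) : ℂ) * γ + z)
        have harg : (2 * ((0 : ℕ) : ℂ) * γ + z) + (M : ℂ) * p
            = 2 * ((N : ℕ) : ℂ) * γ + z := by rw [← h2Nγ]; push_cast; ring
        rw [harg] at h
        exact h
      have h3 : (∑ j ∈ Finset.range N, f (j + 1)) + f 0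
          = (∑ j ∈ Finset.range N, f j) + f 0 := by
        rw [← h1, h2, hfN]
      exact add_right_cancel h3
    calc ∑ j ∈ Finset.range N, J (z + (j : ℂ) * s)
        = ∑ j ∈ Finset.range N, J (z - 2 * (j : ℂ) * γ) :=
          Finset.sum_congr rfl (fun j _ => stepA j)
      _ = ∑ j ∈ Finset.range N, J (z - 2 * ((N - 1 - j : ℕ) : ℂ) * γ) :=
          (Finset.sum_range_reflect (fun j => J (z - 2 * (j : ℂ) * γ)) N).symm
      _ = ∑ j ∈ Finset.range N, f (j + 1) := by
          refine Finset.sum_congr rfl (fun j hj => ?_)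
          have hjN : j < N := Finset.mem_range.mp hj
          have hcast : ((N - 1 - j : ℕ) : ℂ) = (N : ℂ) - 1 - (j : ℂ) := by
            have h1 : N - 1 - j = N - (1 + j) := by omega
            have h2 : 1 + j ≤ N := by omega
            rw [h1, Nat.cast_sub h2]
            push_cast
            ring
          have h := aux_per_nat_sub J p hJ M (2 * (((j + 1 : ℕ)) : ℂ) * γ + z)
          have harg : (2 * (((j + 1 : ℕ)) : ℂ) * γ + z) - (M : ℂ) * p
              = z - 2 * ((N - 1 - j : ℕ) : ℂ) * γ := by
            rw [hcast, ← h2Nγ]; push_cast; ring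
          rw [harg] at h
          exact h
      _ = ∑ j ∈ Finset.range N, f j := key
      _ = E z := (hE z).symm
  -- part 1
  have hNs : (N : ℂ) * s = (2 * (N : ℂ) - (M : ℂ)) * p := by
    rw [hs]; linear_combination -h2Nγ
  have part1 : ∀ z, B (z + (2 * (N : ℂ) - (M : ℂ)) * p) - B z = E z := by
    intro z
    have harg : z + (2 * (N : ℂ) - (M : ℂ)) * p = z + (N : ℂ) * s := by rw [hNs]
    rw [harg, tel N z, hsum z]
  refine ⟨part1, ?_, ?_⟩
  · intro hE0 z
    have h := part1 z
    rw [hE0 z, sub_eq_zero] at h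
    exact h
  · intro hEne m hm hper
    apply hEne
    -- E has period p
    have hEp : ∀ z, E (z + p) = E z := by
      intro z
      rw [hE, hE]
      refine Finset.sum_congr rfl (fun j _ => ?_)
      rw [show 2 * (j : ℂ) * γ + (z + p) = (2 * (j : ℂ) * γ + z) + p by ring, hJ]
    set K : ℕ := 2 * N - M with hK
    have hKc : (K : ℂ) = 2 * (N : ℂ) - (M : ℂ) := by
      rw [hK, Nat.cast_sub hMN.le]; push_cast; ring
    -- iterate the shift
    have hiter : ∀ i : ℕ, ∀ z, B (z + (i : ℂ) * ((K : ℂ) * p)) = B z + (i : ℂ) * E z := by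
      intro i
      induction i with
      | zero => intro z; simp
      | succ i ih =>
        intro z
        have harg : z + ((i + 1 : ℕ) : ℂ) * ((K : ℂ) * p)
            = (z + (i : ℂ) * ((K : ℂ) * p)) + (2 * (N : ℂ) - (M : ℂ)) * p := by
          rw [← hKc]; push_cast; ring
        rw [harg]
        have h := part1 (z + (i : ℂ) * ((K : ℂ) * p))
        have hEshift : E (z + (i : ℂ) * ((K : ℂ) * p)) = E z := by
          have h2 := aux_per_nat E p hEp (i * K) z
          have harg2 : z + ((i * K : ℕ) : ℂ) * p = z + (i : ℂ) * ((K : ℂ) * p) := by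
            push_cast; ring
          rwa [harg2] at h2
        rw [hEshift] at h
        have := ih z
        push_cast
        push_cast at this h
        linear_combination this + h
    intro z
    have h1 := hiter m z
    have h2 := aux_per_nat B ((m : ℂ) * p) hper K z
    have harg : z + (K : ℂ) * ((m : ℂ) * p) = z + (m : ℂ) * ((K : ℂ) * p) := by ring
    rw [harg] at h2
    rw [h2] at h1
    have hmc : (m : ℂ) ≠ 0 := Nat.cast_ne_zero.mpr hm.ne'
    have : (m : ℂ) * E z = 0 := by linear_combination -h1
    exact (mul_eq_zero.mp this).resolve_left hmc
end

section
/- Let M, N be positive integers and γ, τ ∈ ℂ with 2Nγ = Mπτ. Let U : ℂ → ℂ satisfy U(z) = U(z+π) = U(z+πτ) for all z, and define the orbit sum E(z) = Σ_{k=0}^{N−1} [U((2k+1)γ − z) − U(2kγ + z)]. Then E is identically zero if and only if there exist functions A₁, A₂ : ℂ → ℂ with A₁(z) = A₁(z+π) = A₁(z+πτ) = A₁(−γ−z) and A₂(z) = A₂(z+π) = A₂(z+πτ) = A₂(γ−z) for all z, such that U = A₁ + A₂. (For the 'if' direction one may take the explicit functions A₁(z) = Σ_{k=1}^{N} ((2k−1)/(2N))·(U(2kγ+z)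 + U((2k−1)γ−z)) and A₂(z) = Σ_{k=0}^{N−1} (−k/N)·(U(2kγ+z) + U((2k+1)γ−z)).) -/
lemma st7_per_nat {f : ℂ → ℂ} {p : ℂ} (hf : ∀ z, f (z + p) = f z) :
    ∀ (m : ℕ) (z : ℂ), f (z + m * p) = f z := by
  intro m
  induction m with
  | zero => intro z; simp
  | succ m ih =>
      intro z
      have h : z + ((m : ℂ) + 1) * p = (z + m * p) + p := by ring
      rw [Nat.cast_add, Nat.cast_one, h, hf, ih]

lemma st7_per2N {M N : ℕ} {γ τ : ℂ}
    (hrel : 2 * (N : ℂ) * γ = (M : ℂ) * (Real.pi : ℂ) * τ)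
    {f : ℂ → ℂ} (hf : ∀ z, f (z + (Real.pi : ℂ) * τ) = f z) (z : ℂ) :
    f (z + 2 * (N : ℂ) * γ) = f z := by
  have h : z + 2 * (N : ℂ) * γ = z + (M : ℂ) * ((Real.pi : ℂ) * τ) := by
    rw [show z + 2 * (N : ℂ) * γ = z + (2 * (N : ℂ) * γ) by ring, hrel]; ring
  rw [h, st7_per_nat hf M z]

/-- Orbit-sum / decoupling criterion: for `U` doubly periodic
with periods `π` and `πτ`, and `2Nγ = Mπτ`, the orbit sum
`E(z) = Σ_{k=0}^{N−1} (U((2k+1)γ − z) − U(2kγ + z))` vanishes identically if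
and only if `U` decouples as `U = A₁ + A₂` with `A₁` invariant under
`z ↦ −γ−z` and `A₂` invariant under `z ↦ γ−z` (both with periods `π`, `πτ`). -/
theorem statement7 (M N : ℕ) (hM : 0 < M) (hN : 0 < N) (γ τ : ℂ)
    (hrel : 2 * (N : ℂ) * γ = (M : ℂ) * (Real.pi : ℂ) * τ)
    (U : ℂ → ℂ)
    (hU : ∀ z, U (z + (Real.pi : ℂ)) = U z ∧ U (z + (Real.pi : ℂ) * τ) = U z)
    (E : ℂ → ℂ)
    (hE : ∀ z, E z = ∑ k ∈ Finset.range N,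
      (U ((2 * (k : ℂ) + 1) * γ - z) - U (2 * (k : ℂ) * γ + z))) :
    (∀ z, E z = 0) ↔
      ∃ A₁ A₂ : ℂ → ℂ,
        (∀ z, A₁ (z + (Real.pi : ℂ)) = A₁ z ∧ A₁ (z + (Real.pi : ℂ) * τ) = A₁ z ∧
          A₁ (-γ - z) = A₁ z) ∧
        (∀ z, A₂ (z + (Real.pi : ℂ)) = A₂ z ∧ A₂ (z + (Real.pi : ℂ) * τ) = A₂ z ∧
          A₂ (γ - z) = A₂ z) ∧
        (∀ z, U z = A₁ z + A₂ z) := by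
  constructor
  · -- Forward direction: E ≡ 0 gives the explicit decoupling.
    intro hEz
    have hNz : (N : ℂ) ≠ 0 := Nat.cast_ne_zero.mpr hN.ne'
    have hU1' : ∀ w, U (w - (Real.pi : ℂ)) = U w := by
      intro w; simpa using ((hU (w - (Real.pi : ℂ))).1).symm
    have hU2' : ∀ w, U (w - (Real.pi : ℂ) * τ) = U w := by
      intro w; simpa using ((hU (w - (Real.pi : ℂ) * τ)).2).symm
    have hUper : ∀ w, U (w + 2 * (N : ℂ) * γ) = U w :=
      st7_per2N hrel (fun w => (hU w).2)
    refine ⟨fun z => ∑ k ∈ Finset.range N,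
        ((2 * (k : ℂ) + 1) / (2 * (N : ℂ))) *
          (U (2 * ((k : ℂ) + 1) * γ + z) + U ((2 * (k : ℂ) + 1) * γ - z)),
      fun z => ∑ k ∈ Finset.range N,
        (-(k : ℂ) / (N : ℂ)) *
          (U (2 * (k : ℂ) * γ + z) + U ((2 * (k : ℂ) + 1) * γ - z)),
      fun z => ⟨?_, ?_, ?_⟩, fun z => ⟨?_, ?_, ?_⟩, fun z => ?_⟩
    · refine Finset.sum_congr rfl fun k _ => ?_
      rw [show 2 * ((k : ℂ) + 1) * γ + (z + (Real.pi : ℂ))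
            = (2 * ((k : ℂ) + 1) * γ + z) + (Real.pi : ℂ) by ring,
          show (2 * (k : ℂ) + 1) * γ - (z + (Real.pi : ℂ))
            = ((2 * (k : ℂ) + 1) * γ - z) - (Real.pi : ℂ) by ring,
          (hU _).1, hU1']
    · refine Finset.sum_congr rfl fun k _ => ?_
      rw [show 2 * ((k : ℂ) + 1) * γ + (z + (Real.pi : ℂ) * τ)
            = (2 * ((k : ℂ) + 1) * γ + z) + (Real.pi : ℂ) * τ by ring,
          show (2 * (k : ℂ) + 1) * γ - (z + (Real.pi : ℂ) * τ)
            = ((2 * (k : ℂ) + 1) * γ - z) - (Real.pi : ℂ) * τ by ring,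
          (hU _).2, hU2']
    · refine Finset.sum_congr rfl fun k _ => ?_
      rw [show 2 * ((k : ℂ) + 1) * γ + (-γ - z) = (2 * (k : ℂ) + 1) * γ - z by ring,
          show (2 * (k : ℂ) + 1) * γ - (-γ - z) = 2 * ((k : ℂ) + 1) * γ + z by ring]
      ring
    · refine Finset.sum_congr rfl fun k _ => ?_
      rw [show 2 * (k : ℂ) * γ + (z + (Real.pi : ℂ))
            = (2 * (k : ℂ) * γ + z) + (Real.pi : ℂ) by ring,
          show (2 * (k : ℂ) + 1) * γ - (z + (Real.pi : ℂ))
            = ((2 * (k : ℂ) + 1) * γ - z) - (Real.pi : ℂ) by ring,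
          (hU _).1, hU1']
    · refine Finset.sum_congr rfl fun k _ => ?_
      rw [show 2 * (k : ℂ) * γ + (z + (Real.pi : ℂ) * τ)
            = (2 * (k : ℂ) * γ + z) + (Real.pi : ℂ) * τ by ring,
          show (2 * (k : ℂ) + 1) * γ - (z + (Real.pi : ℂ) * τ)
            = ((2 * (k : ℂ) + 1) * γ - z) - (Real.pi : ℂ) * τ by ring,
          (hU _).2, hU2']
    · refine Finset.sum_congr rfl fun k _ => ?_
      rw [show 2 * (k : ℂ) * γ + (γ - z) = (2 * (k : ℂ) + 1) * γ - z by ring,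
          show (2 * (k : ℂ) + 1) * γ - (γ - z) = 2 * (k : ℂ) * γ + z by ring]
      ring
    · -- the decoupling identity `U = A₁ + A₂`
      have hS : ∑ k ∈ Finset.range N, U ((2 * (k : ℂ) + 1) * γ - z)
          = ∑ k ∈ Finset.range N, U (2 * (k : ℂ) * γ + z) := by
        have h : E z = 0 := hEz z
        rw [hE z, Finset.sum_sub_distrib] at h
        exact sub_eq_zero.mp h
      simp only
      set g : ℕ → ℂ :=
        fun j => ((2 * (j : ℂ) - 1) / (2 * (N : ℂ))) * U (2 * (j : ℂ) * γ + z) with hg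
      have step1 : (∑ k ∈ Finset.range N,
          (2 * (k : ℂ) + 1) / (2 * (N : ℂ)) * (U (2 * ((k : ℂ) + 1) * γ + z)
            + U ((2 * (k : ℂ) + 1) * γ - z)))
          + (∑ k ∈ Finset.range N,
            -(k : ℂ) / (N : ℂ) * (U (2 * (k : ℂ) * γ + z) + U ((2 * (k : ℂ) + 1) * γ - z)))
          = ∑ k ∈ Finset.range N,
            (g (k + 1) + (1 / (2 * (N : ℂ))) * U ((2 * (k : ℂ) + 1) * γ - z)
              + (-(k : ℂ) / (N : ℂ)) * U (2 * (k : ℂ) * γ + z)) := by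
        rw [← Finset.sum_add_distrib]
        refine Finset.sum_congr rfl fun k _ => ?_
        simp only [hg]
        push_cast
        field_simp
        ring
      have hsucc' := Finset.sum_range_succ' g N
      have hsucc := Finset.sum_range_succ g N
      have hsum1 : ∑ k ∈ Finset.range N, g (k + 1)
          = ∑ k ∈ Finset.range N, g k + g N - g 0 := by
        linear_combination hsucc - hsucc'
      have hgN : g N - g 0 = U z := by
        have h1 : 2 * ((N : ℕ) : ℂ) * γ + z = z + 2 * (N : ℂ) * γ := by ring
        have h0 : 2 * ((0 : ℕ) : ℂ) * γ + z = z := by push_cast; ring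
        simp only [hg, h1, h0, hUper, Nat.cast_zero]
        field_simp
        ring
      have step2 : ∑ k ∈ Finset.range N, (1 / (2 * (N : ℂ))) * U ((2 * (k : ℂ) + 1) * γ - z)
          = ∑ k ∈ Finset.range N, (1 / (2 * (N : ℂ))) * U (2 * (k : ℂ) * γ + z) := by
        rw [← Finset.mul_sum, ← Finset.mul_sum, hS]
      have hzero : ∑ k ∈ Finset.range N,
          (g k + (1 / (2 * (N : ℂ))) * U (2 * (k : ℂ) * γ + z)
            + (-(k : ℂ) / (N : ℂ)) * U (2 * (k : ℂ) * γ + z)) = 0 := by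
        refine Finset.sum_eq_zero fun k _ => ?_
        simp only [hg]
        field_simp
        ring
      rw [step1, Finset.sum_add_distrib, Finset.sum_add_distrib, step2, hsum1]
      rw [Finset.sum_add_distrib, Finset.sum_add_distrib] at hzero
      linear_combination -hzero - hgN
  · -- Reverse direction: a decoupling forces the orbit sum to vanish.
    rintro ⟨A₁, A₂, h1, h2, hsum⟩ z
    rw [hE z]
    have key : ∀ k ∈ Finset.range N,
        U ((2 * (k : ℂ) + 1) * γ - z) - U (2 * (k : ℂ) * γ + z)
          = (A₁ (z + 2 * ((N - 1 - k : ℕ) : ℂ) * γ) - A₁ (z + 2 * (k : ℂ) * γ))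
            + (A₂ (z + 2 * (((N - 1 - k : ℕ) : ℂ) + 1) * γ) - A₂ (z + 2 * (k : ℂ) * γ)) := by
      intro k hk
      rw [Finset.mem_range] at hk
      have hc : ((N - 1 - k : ℕ) : ℂ) = (N : ℂ) - 1 - k := by
        have h : N - 1 - k = N - (1 + k) := by omega
        rw [h, Nat.cast_sub (by omega)]
        push_cast; ring
      have e1 : A₁ ((2 * (k : ℂ) + 1) * γ - z) = A₁ (z + 2 * ((N - 1 - k : ℕ) : ℂ) * γ) := by
        have a1 : (2 * (k : ℂ) + 1) * γ - z = -γ - (z - (2 * (k : ℂ) + 2) * γ) := by ring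
        rw [a1, (h1 _).2.2]
        have a2 : (z - (2 * (k : ℂ) + 2) * γ) + 2 * (N : ℂ) * γ
            = z + 2 * ((N - 1 - k : ℕ) : ℂ) * γ := by rw [hc]; ring
        rw [← a2, st7_per2N hrel (fun w => (h1 w).2.1)]
      have e2 : A₂ ((2 * (k : ℂ) + 1) * γ - z)
          = A₂ (z + 2 * (((N - 1 - k : ℕ) : ℂ) + 1) * γ) := by
        have a1 : (2 * (k : ℂ) + 1) * γ - z = γ - (z - 2 * (k : ℂ) * γ) := by ring
        rw [a1, (h2 _).2.2]
        have a2 : (z - 2 * (k : ℂ) * γ) + 2 * (N : ℂ) * γ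
            = z + 2 * (((N - 1 - k : ℕ) : ℂ) + 1) * γ := by rw [hc]; ring
        rw [← a2, st7_per2N hrel (fun w => (h2 w).2.1)]
      have e3 : (2 * (k : ℂ)) * γ + z = z + 2 * (k : ℂ) * γ := by ring
      rw [hsum, hsum, e1, e2, e3]
      ring
    rw [Finset.sum_congr rfl key, Finset.sum_add_distrib, Finset.sum_sub_distrib,
      Finset.sum_sub_distrib]
    have r1 : ∑ k ∈ Finset.range N, A₁ (z + 2 * ((N - 1 - k : ℕ) : ℂ) * γ)
        = ∑ k ∈ Finset.range N, A₁ (z + 2 * (k : ℂ) * γ) :=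
      Finset.sum_range_reflect (fun k => A₁ (z + 2 * (k : ℂ) * γ)) N
    have r2 : ∑ k ∈ Finset.range N, A₂ (z + 2 * (((N - 1 - k : ℕ) : ℂ) + 1) * γ)
        = ∑ k ∈ Finset.range N, A₂ (z + 2 * (k : ℂ) * γ) := by
      have r2a : ∑ k ∈ Finset.range N, A₂ (z + 2 * (((N - 1 - k : ℕ) : ℂ) + 1) * γ)
          = ∑ k ∈ Finset.range N, A₂ (z + 2 * (((k : ℕ) : ℂ) + 1) * γ) :=
        Finset.sum_range_reflect (fun k => A₂ (z + 2 * ((k : ℂ) + 1) * γ)) N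
      rw [r2a]
      have f0 : ∀ k : ℕ, A₂ (z + 2 * ((k : ℂ) + 1) * γ)
          = A₂ (z + 2 * ((k + 1 : ℕ) : ℂ) * γ) := by
        intro k; push_cast; ring_nf
      have succ' := Finset.sum_range_succ' (fun k : ℕ => A₂ (z + 2 * (k : ℂ) * γ)) N
      have succ := Finset.sum_range_succ (fun k : ℕ => A₂ (z + 2 * (k : ℂ) * γ)) N
      have hNper : A₂ (z + 2 * ((N : ℕ) : ℂ) * γ) = A₂ (z + 2 * ((0 : ℕ) : ℂ) * γ) := by
        simp only [Nat.cast_zero]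
        rw [st7_per2N hrel (fun w => (h2 w).2.1)]
        norm_num
      calc ∑ k ∈ Finset.range N, A₂ (z + 2 * ((k : ℂ) + 1) * γ)
          = ∑ k ∈ Finset.range N, A₂ (z + 2 * ((k + 1 : ℕ) : ℂ) * γ) :=
            Finset.sum_congr rfl (fun k _ => f0 k)
        _ = ∑ k ∈ Finset.range (N + 1), A₂ (z + 2 * (k : ℂ) * γ)
              - A₂ (z + 2 * ((0 : ℕ) : ℂ) * γ) := by rw [succ']; ring
        _ = ∑ k ∈ Finset.range N, A₂ (z + 2 * (k : ℂ) * γ) := by rw [succ, hNper]; ring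
    rw [r1, r2]
    ring
end

section
/- Let S ⊆ {−1,0,1}² \ {(0,0)}, let s ∈ ℤ and let p ∈ 𝒬̃_s. For every finite sequence p₀, p₁, …, p_n of points of ℤ² \ {(0,0)} with p₀ = p and p_{k+1} − p_k ∈ S for all 0 ≤ k < n, there exists a unique sequence of integers s₀, s₁, …, s_n with s₀ = s, |s_{k+1} − s_k| ≤ 1 for all 0 ≤ k < n, and p_k ∈ 𝒬̃_{s_k} for all 0 ≤ k ≤ n. (Equivalently, walks in ℤ² \ {(0,0)} starting at p are in bijection with walks in the spiral space Π = {(s,p) : s ∈ ℤ, p ∈ 𝒬̃_s} starting at (s,p) with the same sequence of steps.) -/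
/-- The quarter-turn rotation `r(a,b) = (−b,a)` of `ℤ²`. -/
def rot : Equiv.Perm (ℤ × ℤ) where
  toFun v := (-v.2, v.1)
  invFun v := (v.2, -v.1)
  left_inv v := by simp
  right_inv v := by simp

/-- The half-open quadrant `𝒬̃₀ = {(i,j) : i > 0, j ≥ 0}`. -/
def Qzero : Set (ℤ × ℤ) := {v | 0 < v.1 ∧ 0 ≤ v.2}

/-- The rotated half-open quadrants `𝒬̃_s = r^s(𝒬̃₀)`. -/
def Qt (s : ℤ) : Set (ℤ × ℤ) := (rot ^ s : Equiv.Perm (ℤ × ℤ)) '' Qzero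

@[simp] lemma rot_apply (v : ℤ × ℤ) : rot v = (-v.2, v.1) := rfl

lemma rot_zpow0 (v : ℤ × ℤ) : (rot ^ (0:ℤ) : Equiv.Perm (ℤ × ℤ)) v = v := by
  rw [zpow_zero]; rfl
lemma rot_zpow1 (v : ℤ × ℤ) : (rot ^ (1:ℤ) : Equiv.Perm (ℤ × ℤ)) v = (-v.2, v.1) := by
  rw [zpow_one, rot_apply]
lemma rot_zpow2 (v : ℤ × ℤ) : (rot ^ (2:ℤ) : Equiv.Perm (ℤ × ℤ)) v = (-v.1, -v.2) := by
  rw [show (2:ℤ) = ((2:ℕ):ℤ) by norm_num, zpow_natCast]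
  simp [pow_succ, Equiv.Perm.mul_apply]
lemma rot_zpow3 (v : ℤ × ℤ) : (rot ^ (3:ℤ) : Equiv.Perm (ℤ × ℤ)) v = (v.2, -v.1) := by
  rw [show (3:ℤ) = ((3:ℕ):ℤ) by norm_num, zpow_natCast]
  simp [pow_succ, Equiv.Perm.mul_apply]
lemma rot_zpow4 : (rot ^ (4:ℤ) : Equiv.Perm (ℤ × ℤ)) = 1 := by
  apply Equiv.ext; intro v
  rw [show (4:ℤ) = ((4:ℕ):ℤ) by norm_num, zpow_natCast]
  simp [pow_succ, Equiv.Perm.mul_apply]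

lemma Qt_emod (s : ℤ) : Qt s = Qt (s % 4) := by
  unfold Qt
  suffices h : (rot ^ s : Equiv.Perm (ℤ × ℤ)) = rot ^ (s % 4) by rw [h]
  conv_lhs => rw [show s = 4 * (s / 4) + s % 4 by omega]
  rw [zpow_add, zpow_mul, rot_zpow4, one_zpow, one_mul]

/-- Explicit description of the quadrant with index `r ∈ {0,1,2,3}`. -/
def QP (r : ℤ) (q : ℤ × ℤ) : Prop :=
  (r = 0 ∧ 0 < q.1 ∧ 0 ≤ q.2) ∨ (r = 1 ∧ q.1 ≤ 0 ∧ 0 < q.2) ∨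
  (r = 2 ∧ q.1 < 0 ∧ q.2 ≤ 0) ∨ (r = 3 ∧ 0 ≤ q.1 ∧ q.2 < 0)

lemma mem_Qt_iff (s : ℤ) (q : ℤ × ℤ) : q ∈ Qt s ↔ QP (s % 4) q := by
  rw [Qt_emod]
  have h4 : s % 4 = 0 ∨ s % 4 = 1 ∨ s % 4 = 2 ∨ s % 4 = 3 := by omega
  unfold Qt QP Qzero
  rcases h4 with h | h | h | h <;> rw [h] <;> constructor
  · rintro ⟨v, hv, rfl⟩
    simp only [Set.mem_setOf_eq] at hv; rw [rot_zpow0]; omega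
  · intro hq
    exact ⟨q, by simp only [Set.mem_setOf_eq]; omega, by rw [rot_zpow0]⟩
  · rintro ⟨v, hv, rfl⟩
    simp only [Set.mem_setOf_eq] at hv; rw [rot_zpow1]; dsimp only; omega
  · intro hq
    refine ⟨(q.2, -q.1), by simp only [Set.mem_setOf_eq]; omega, ?_⟩
    rw [rot_zpow1]; simp
  · rintro ⟨v, hv, rfl⟩
    simp only [Set.mem_setOf_eq] at hv; rw [rot_zpow2]; dsimp only; omega
  · intro hq
    refine ⟨(-q.1, -q.2), by simp only [Set.mem_setOf_eq]; omega, ?_⟩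
    rw [rot_zpow2]; simp
  · rintro ⟨v, hv, rfl⟩
    simp only [Set.mem_setOf_eq] at hv; rw [rot_zpow3]; dsimp only; omega
  · intro hq
    refine ⟨(-q.2, q.1), by simp only [Set.mem_setOf_eq]; omega, ?_⟩
    rw [rot_zpow3]; simp

lemma Qt_mod_eq {a b : ℤ} {q : ℤ × ℤ} (ha : q ∈ Qt a) (hb : q ∈ Qt b) : a % 4 = b % 4 := by
  rw [mem_Qt_iff] at ha hb; unfold QP at ha hb; omega

lemma step_lemma (s : ℤ) (p q : ℤ × ℤ) (hp : p ∈ Qt s) (hq : q ≠ (0, 0))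
    (h1 : (q.1 - p.1).natAbs ≤ 1) (h2 : (q.2 - p.2).natAbs ≤ 1) :
    ∃ t : ℤ, -1 ≤ t - s ∧ t - s ≤ 1 ∧ q ∈ Qt t := by
  have hq' : q.1 ≠ 0 ∨ q.2 ≠ 0 := by
    by_contra h
    push_neg at h
    exact hq (by obtain ⟨q1, q2⟩ := q; simp_all)
  rw [mem_Qt_iff] at hp
  unfold QP at hp
  rcases hp with ⟨h0, hp1, hp2⟩ | ⟨h0, hp1, hp2⟩ | ⟨h0, hp1, hp2⟩ | ⟨h0, hp1, hp2⟩
  · by_cases c1 : 0 < q.1 ∧ 0 ≤ q.2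
    · exact ⟨s, by omega, by omega, by rw [mem_Qt_iff]; unfold QP; omega⟩
    by_cases c2 : q.1 ≤ 0 ∧ 0 < q.2
    · exact ⟨s + 1, by omega, by omega, by rw [mem_Qt_iff]; unfold QP; omega⟩
    · exact ⟨s - 1, by omega, by omega, by rw [mem_Qt_iff]; unfold QP; omega⟩
  · by_cases c1 : q.1 ≤ 0 ∧ 0 < q.2
    · exact ⟨s, by omega, by omega, by rw [mem_Qt_iff]; unfold QP; omega⟩
    by_cases c2 : q.1 < 0 ∧ q.2 ≤ 0
    · exact ⟨s + 1, by omega, by omega, by rw [mem_Qt_iff]; unfold QP; omega⟩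
    · exact ⟨s - 1, by omega, by omega, by rw [mem_Qt_iff]; unfold QP; omega⟩
  · by_cases c1 : q.1 < 0 ∧ q.2 ≤ 0
    · exact ⟨s, by omega, by omega, by rw [mem_Qt_iff]; unfold QP; omega⟩
    by_cases c2 : 0 ≤ q.1 ∧ q.2 < 0
    · exact ⟨s + 1, by omega, by omega, by rw [mem_Qt_iff]; unfold QP; omega⟩
    · exact ⟨s - 1, by omega, by omega, by rw [mem_Qt_iff]; unfold QP; omega⟩
  · by_cases c1 : 0 ≤ q.1 ∧ q.2 < 0
    · exact ⟨s, by omega, by omega, by rw [mem_Qt_iff]; unfold QP; omega⟩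
    by_cases c2 : 0 < q.1 ∧ 0 ≤ q.2
    · exact ⟨s + 1, by omega, by omega, by rw [mem_Qt_iff]; unfold QP; omega⟩
    · exact ⟨s - 1, by omega, by omega, by rw [mem_Qt_iff]; unfold QP; omega⟩

lemma exists_lift : ∀ (n : ℕ) (p : Fin (n + 1) → ℤ × ℤ) (s : ℤ), p 0 ∈ Qt s →
    (∀ k, p k ≠ (0, 0)) →
    (∀ k : Fin n, (p k.succ - p k.castSucc).1.natAbs ≤ 1 ∧
      (p k.succ - p k.castSucc).2.natAbs ≤ 1) →
    ∃ σ : Fin (n + 1) → ℤ, σ 0 = s ∧ (∀ k : Fin n, |σ k.succ - σ k.castSucc| ≤ 1) ∧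
      ∀ k, p k ∈ Qt (σ k) := by
  intro n
  induction n with
  | zero =>
    intro p s h0 _ _
    refine ⟨fun _ => s, rfl, fun k => k.elim0, fun k => ?_⟩
    have hk : k = 0 := Fin.fin_one_eq_zero k
    rw [hk]; exact h0
  | succ n ih =>
    intro p s h0 hne hstep
    obtain ⟨σ, hσ0, hσstep, hσmem⟩ := ih (fun k => p k.castSucc) s
      (by simpa using h0) (fun k => hne _)
      (fun k => by have := hstep k.castSucc; rwa [Fin.succ_castSucc] at this)
    obtain ⟨t, ht1, ht2, htm⟩ := step_lemma (σ (Fin.last n)) (p (Fin.last n).castSucc)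
      (p (Fin.last n).succ) (hσmem (Fin.last n)) (hne _)
      (hstep (Fin.last n)).1 (hstep (Fin.last n)).2
    refine ⟨Fin.snoc σ t, ?_, ?_, ?_⟩
    · rw [show (0 : Fin (n + 2)) = (0 : Fin (n + 1)).castSucc by simp, Fin.snoc_castSucc]
      exact hσ0
    · intro k
      refine Fin.lastCases ?_ ?_ k
      · rw [Fin.succ_last, Fin.snoc_last, Fin.snoc_castSucc, abs_le]
        omega
      · intro j
        rw [Fin.succ_castSucc, Fin.snoc_castSucc, Fin.snoc_castSucc]
        exact hσstep j
    · intro k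
      refine Fin.lastCases ?_ ?_ k
      · rw [Fin.snoc_last, ← Fin.succ_last]
        exact htm
      · intro j
        rw [Fin.snoc_castSucc]
        exact hσmem j

/-- Walks in `ℤ² \ {(0,0)}` with small steps lift uniquely to
the spiral space: given a walk `p₀, …, p_n` avoiding the origin with steps in
`S ⊆ {−1,0,1}² \ {(0,0)}` and `p₀ ∈ 𝒬̃_s`, there is a unique sequence of
winding indices `σ₀ = s, σ₁, …, σ_n` with `|σ_{k+1} − σ_k| ≤ 1` and
`p_k ∈ 𝒬̃_{σ_k}` for all `k`. -/
theorem statement11 (S : Set (ℤ × ℤ))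
    (hS : ∀ v ∈ S, v ≠ (0, 0) ∧ v.1.natAbs ≤ 1 ∧ v.2.natAbs ≤ 1)
    (s : ℤ) (n : ℕ) (p : Fin (n + 1) → ℤ × ℤ)
    (hp0 : p 0 ∈ Qt s)
    (hne : ∀ k, p k ≠ (0, 0))
    (hstep : ∀ k : Fin n, p k.succ - p k.castSucc ∈ S) :
    ∃! σ : Fin (n + 1) → ℤ,
      σ 0 = s ∧ (∀ k : Fin n, |σ k.succ - σ k.castSucc| ≤ 1) ∧
      ∀ k, p k ∈ Qt (σ k) := by
  obtain ⟨σ, h0, hstep', hmem⟩ := exists_lift n p s hp0 hne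
    (fun k => (hS _ (hstep k)).2)
  refine ⟨σ, ⟨h0, hstep', hmem⟩, ?_⟩
  rintro τ ⟨t0, tstep, tmem⟩
  funext k
  induction k using Fin.induction with
  | zero => rw [t0, h0]
  | succ j ihj =>
    have e1 := Qt_mod_eq (tmem j.succ) (hmem j.succ)
    have b1 := tstep j
    have b2 := hstep' j
    rw [abs_le] at b1 b2
    omega
end
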